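/- Let γ : I → ℝ × M be an inextendible future-directed timelike curve in (ℝ × M, -dτ² + σ) with (M,σ) a complete Riemannian manifold, and suppose γ⁰(s₀) < 0 at the left endpoint s₀ of I. If γ never meets the slice {τ = 0}, then the projection of γ to M stays in a compact subset of M (the closed ball of radius -γ⁰(s₀) around its starting point), which contradicts inextendibility; hence γ intersects {τ = 0}. -/

import Mathlib

/-!
Before the curve reaches `{τ = 0}` its parameter interval `I` is bounded above by `0`, and
`γ` is `1`-Lipschitz on `I`, so by completeness of `M` it has a limit `L` at `b = sup I`.
Continuing the curve by the constant `L` from `b` on is again timelike: for `s < b ≤ t` the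
strict inequality comes from the triangle inequality through a point of `I` in `(s, b)`; this
extension lives on a strictly larger open interval, contradicting inextendibility.
-/

/-- A future-directed timelike curve in the Lorentzian product `(ℝ × M, -dτ² + σ)`,
parametrized by the time coordinate `τ` over `I` (the curve is `s ↦ (s, γ s)`). -/
def TimelikeOn {M : Type*} [MetricSpace M] (γ : ℝ → M) (I : Set ℝ) : Prop :=
  ∀ s ∈ I, ∀ t ∈ I, s < t → dist (γ s) (γ t) < t - s

/-- Inextendibility of the timelike curve `s ↦ (s, γ s)`, `s ∈ I`. -/
def InextendibleTimelike {M : Type*} [MetricSpace M] (γ : ℝ → M) (I : Set ℝ) : Prop :=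
  TimelikeOn γ I ∧
    ∀ (J : Set ℝ) (γ' : ℝ → M), IsOpen J → J.OrdConnected → I ⊆ J →
      (∀ s ∈ I, γ' s = γ s) → TimelikeOn γ' J → J = I

open Filter Set Topology

theorem UniformContinuousOn.cauchy_map {α β : Type*} [UniformSpace α] [UniformSpace β]
    {f : α → β} {s : Set α} {l : Filter α} (hf : UniformContinuousOn f s) (hl : Cauchy l)
    (hls : l ≤ 𝓟 s) : Cauchy (map f l) := by
  refine ⟨hl.1.map f, ?_⟩
  rw [prod_map_map_eq]
  refine hf.mono_left (le_inf hl.2 ?_)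
  rw [← prod_principal_principal]
  exact prod_mono hls hls

theorem UniformContinuousOn.exists_tendsto_nhdsWithin {α β : Type*} [UniformSpace α]
    [UniformSpace β] [CompleteSpace β] {f : α → β} {s : Set α} {b : α}
    (hf : UniformContinuousOn f s) (hb : b ∈ closure s) : ∃ L, Tendsto f (𝓝[s] b) (𝓝 L) := by
  have := mem_closure_iff_nhdsWithin_neBot.mp hb
  exact cauchy_map_iff_exists_tendsto.mp
    (hf.cauchy_map (cauchy_nhds.mono nhdsWithin_le_nhds) inf_le_right)

theorem LipschitzOnWith.dist_le_mul_of_tendsto {α β : Type*} [PseudoMetricSpace α]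
    [PseudoMetricSpace β] {K : NNReal} {f : α → β} {s : Set α} {x b : α} {L : β}
    (hf : LipschitzOnWith K f s) (hx : x ∈ s) (hb : b ∈ closure s)
    (hL : Tendsto f (𝓝[s] b) (𝓝 L)) : dist (f x) L ≤ K * dist x b := by
  have := mem_closure_iff_nhdsWithin_neBot.mp hb
  refine le_of_tendsto_of_tendsto (tendsto_const_nhds.dist hL)
    ((tendsto_const_nhds.dist (tendsto_id.mono_left nhdsWithin_le_nhds)).const_mul _) ?_
  filter_upwards [self_mem_nhdsWithin] with t ht using hf.dist_le_mul x hx t ht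

theorem IsLUB.notMem_of_isOpen {α : Type*} [LinearOrder α] [TopologicalSpace α]
    [OrderTopology α] [NoMaxOrder α] [DenselyOrdered α] {s : Set α} {a : α} (ha : IsLUB s a)
    (hs : IsOpen s) : a ∉ s := fun has ↦ by
  obtain ⟨x, hax, hxs⟩ := ((frequently_gt_nhds a).and_eventually (hs.mem_nhds has)).exists
  exact (ha.1 hxs).not_gt hax

namespace TimelikeOn

variable {M : Type*} [MetricSpace M] {γ : ℝ → M} {I : Set ℝ}

theorem dist_le (hγ : TimelikeOn γ I) {s t : ℝ} (hs : s ∈ I) (ht : t ∈ I) (hst : s ≤ t) :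
    dist (γ s) (γ t) ≤ t - s := by
  rcases hst.eq_or_lt with rfl | hlt
  · simp
  · exact (hγ s hs t ht hlt).le

theorem lipschitzOnWith (hγ : TimelikeOn γ I) : LipschitzOnWith 1 γ I := by
  refine LipschitzOnWith.mk_one fun s hs t ht ↦ ?_
  rw [Real.dist_eq]
  rcases le_total s t with hst | hts
  · rw [abs_sub_comm, abs_of_nonneg (sub_nonneg.mpr hst)]
    exact hγ.dist_le hs ht hst
  · rw [abs_of_nonneg (sub_nonneg.mpr hts), dist_comm]
    exact hγ.dist_le ht hs hts

theorem exists_tendsto_nhdsWithin [CompleteSpace M] (hγ : TimelikeOn γ I) {b : ℝ}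
    (hb : b ∈ closure I) : ∃ L, Tendsto γ (𝓝[I] b) (𝓝 L) :=
  hγ.lipschitzOnWith.uniformContinuousOn.exists_tendsto_nhdsWithin hb

theorem dist_le_of_tendsto (hγ : TimelikeOn γ I) {b w : ℝ} {L : M} (hb : IsLUB I b)
    (hw : w ∈ I) (hL : Tendsto γ (𝓝[I] b) (𝓝 L)) : dist (γ w) L ≤ b - w := by
  have := hγ.lipschitzOnWith.dist_le_mul_of_tendsto hw (hb.mem_closure ⟨w, hw⟩) hL
  rwa [NNReal.coe_one, one_mul, Real.dist_eq, abs_sub_comm,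
    abs_of_nonneg (sub_nonneg.mpr (hb.1 hw))] at this

theorem extend_by_limit (hγ : TimelikeOn γ I) {b : ℝ} {L : M} (hb : IsLUB I b)
    (hL : Tendsto γ (𝓝[I] b) (𝓝 L)) {J : Set ℝ} (hJ : J ∩ Iio b ⊆ I) :
    TimelikeOn (fun t ↦ if t < b then γ t else L) J := by
  intro s hs t ht hst
  dsimp only
  by_cases hsb : s < b
  · by_cases htb : t < b
    · rw [if_pos hsb, if_pos htb]
      exact hγ s (hJ ⟨hs, hsb⟩) t (hJ ⟨ht, htb⟩) hst
    · rw [if_pos hsb, if_neg htb]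
      obtain ⟨w, hw, hsw, -⟩ := hb.exists_between hsb
      calc dist (γ s) L ≤ dist (γ s) (γ w) + dist (γ w) L := dist_triangle _ _ _
        _ < (w - s) + (b - w) :=
          add_lt_add_of_lt_of_le (hγ s (hJ ⟨hs, hsb⟩) w hw hsw) (hγ.dist_le_of_tendsto hb hw hL)
        _ ≤ t - s := by linarith [not_lt.mp htb]
  · have htb : ¬t < b := fun htb ↦ hsb (hst.trans htb)
    rw [if_neg hsb, if_neg htb, dist_self]
    linarith

end TimelikeOn

theorem InextendibleTimelike.not_bddAbove {M : Type*} [MetricSpace M] [CompleteSpace M]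
    {γ : ℝ → M} {I : Set ℝ} (hγ : InextendibleTimelike γ I) (hI : IsOpen I)
    (hI' : I.OrdConnected) (hne : I.Nonempty) : ¬BddAbove I := by
  intro hbdd
  have hb : IsLUB I (sSup I) := isLUB_csSup hne hbdd
  have hbI : sSup I ∉ I := hb.notMem_of_isOpen hI
  have hI_lt : ∀ s ∈ I, s < sSup I := fun s hs ↦ (hb.1 hs).lt_of_ne fun h ↦ hbI (h ▸ hs)
  obtain ⟨a, ha⟩ := hne
  obtain ⟨L, hL⟩ := hγ.1.exists_tendsto_nhdsWithin (hb.mem_closure ⟨a, ha⟩)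
  have hJ : (I ∪ Ioi a) ∩ Iio (sSup I) ⊆ I := by
    rintro x ⟨hx | hax, hxb⟩
    · exact hx
    · obtain ⟨w, hw, hxw, -⟩ := hb.exists_between hxb
      exact hI'.out ha hw ⟨hax.le, hxw.le⟩
  have hJ_ordConnected : (I ∪ Ioi a).OrdConnected := by
    rw [← isPreconnected_iff_ordConnected] at hI' ⊢
    refine hI'.union' ?_ isPreconnected_Ioi
    obtain ⟨w, hw, haw, -⟩ := hb.exists_between (hI_lt a ha)
    exact ⟨w, hw, haw⟩
  have hJI := hγ.2 _ _ (hI.union isOpen_Ioi) hJ_ordConnected subset_union_left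
    (fun s hs ↦ if_pos (hI_lt s hs))
    (hγ.1.extend_by_limit hb hL hJ)
  exact hbI (hJI.subset (Or.inr (hI_lt a ha)))

theorem inextendible_timelike_meets_zero_slice_general
    {M : Type*} [MetricSpace M] [CompleteSpace M]
    (γ : ℝ → M) (I : Set ℝ) (hI : IsOpen I) (hI' : I.OrdConnected)
    (hγ : InextendibleTimelike γ I)
    (s₀ : ℝ) (hs₀ : s₀ ∈ I) (hneg : s₀ < 0) :
    (∀ s ∈ I, s₀ ≤ s → s ≤ 0 → γ s ∈ Metric.closedBall (γ s₀) (-s₀)) ∧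
    (0 : ℝ) ∈ I := by
  refine ⟨fun s hs hs₀s hs0 ↦ ?_, ?_⟩
  · rw [Metric.mem_closedBall, dist_comm]
    linarith [hγ.1.dist_le hs₀ hs hs₀s]
  · by_contra h0
    have hI_lt : ∀ s ∈ I, s < 0 := fun s hs ↦
      not_le.mp fun hs0 ↦ h0 (hI'.out hs₀ hs ⟨hneg.le, hs0⟩)
    exact hγ.not_bddAbove hI hI' ⟨s₀, hs₀⟩ ⟨0, fun s hs ↦ (hI_lt s hs).le⟩

/-- Let `γ` be an inextendible future-directed timelike curve in
`(ℝ × M, -dτ² + σ)` with `(M,σ)` complete, and suppose the time coordinate is negative at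
some parameter `s₀` near the left endpoint.  As long as `γ` has not reached the slice
`{τ = 0}`, its projection to `M` stays in the compact closed ball of radius `-γ⁰(s₀)`
around its starting point — which is incompatible with inextendibility; hence `γ`
intersects the slice `{τ = 0}`. -/
theorem inextendible_timelike_meets_zero_slice
    {M : Type*} [MetricSpace M] [CompleteSpace M] [ProperSpace M]
    (γ : ℝ → M) (I : Set ℝ) (hI : IsOpen I) (hI' : I.OrdConnected)
    (hγ : InextendibleTimelike γ I)
    (s₀ : ℝ) (hs₀ : s₀ ∈ I) (hneg : s₀ < 0) :
    (∀ s ∈ I, s₀ ≤ s → s ≤ 0 → γ s ∈ Metric.closedBall (γ s₀) (-s₀)) ∧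
    (0 : ℝ) ∈ I :=
  inextendible_timelike_meets_zero_slice_general γ I hI hI' hγ s₀ hs₀ hneg
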